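/- Let μ be a finite measure on a measurable space X, let u, v : X → ℝ be measurable functions with u ≤ 0 and v ≤ 0 on X, and let δ > 0 and k > 0 be real numbers. Then μ({x ∈ X : u(x) > v(x) + δ}) ≤ μ({u < −k}) + μ({v < −k}) + (2/δ) · ∫_X |max(u,−k) − max(v,−k)| dμ. -/

import Mathlib

open MeasureTheory

/-! Off the sets `{u < -k}` and `{v < -k}` both truncations are the identity, so there
`u > v + δ` forces `|max u (-k) - max v (-k)| ≥ δ`; Markov's inequality bounds the measure of
that set by `δ⁻¹ ∫ |max u (-k) - max v (-k)| dμ`; the integrand is bounded by `|k|` because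
`u, v ≤ 0`, so it is integrable and the integral is not a junk value. -/

lemma abs_max_sub_max_le_abs_of_nonpos {a b : ℝ} (ha : a ≤ 0) (hb : b ≤ 0) (c : ℝ) :
    |max a c - max b c| ≤ |c| := by
  rcases le_or_gt c 0 with hc | hc
  · rw [abs_le, abs_of_nonpos hc]
    constructor <;> linarith [le_max_right a c, le_max_right b c, max_le ha hc, max_le hb hc]
  · rw [max_eq_right (ha.trans hc.le), max_eq_right (hb.trans hc.le), sub_self, abs_zero]
    exact abs_nonneg c

lemma setOf_add_lt_subset_truncation {X : Type*} (u v : X → ℝ) (δ k : ℝ) :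
    {x | u x > v x + δ} ⊆
      {x | u x < -k} ∪ {x | v x < -k} ∪ {x | δ ≤ |max (u x) (-k) - max (v x) (-k)|} := by
  intro x (hx : v x + δ < u x)
  by_cases hu : u x < -k
  · exact Or.inl (Or.inl hu)
  by_cases hv : v x < -k
  · exact Or.inl (Or.inr hv)
  right
  push Not at hu hv
  show δ ≤ |max (u x) (-k) - max (v x) (-k)|
  rw [max_eq_left hu, max_eq_left hv]
  exact le_abs.mpr (Or.inl (by linarith))

lemma measure_le_ofReal_integral_div {X : Type*} [MeasurableSpace X] {μ : Measure X}
    [IsFiniteMeasure μ] {f : X → ℝ} (hf_nonneg : 0 ≤ᵐ[μ] f) (hf_int : Integrable f μ)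
    {ε : ℝ} (hε : 0 < ε) :
    μ {x | ε ≤ f x} ≤ ENNReal.ofReal ((∫ x, f x ∂μ) / ε) := by
  rw [← ofReal_measureReal]
  exact ENNReal.ofReal_le_ofReal <|
    (le_div_iff₀' hε).mpr (mul_meas_ge_le_integral_of_nonneg hf_nonneg hf_int ε)

theorem measure_gt_add_le_truncation_general {X : Type*} [MeasurableSpace X]
    (μ : Measure X) [IsFiniteMeasure μ] (u v : X → ℝ)
    (hu : Measurable u) (hv : Measurable v)
    (hu0 : ∀ x, u x ≤ 0) (hv0 : ∀ x, v x ≤ 0)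
    (δ k : ℝ) (hδ : 0 < δ) :
    μ {x | u x > v x + δ} ≤
      μ {x | u x < -k} + μ {x | v x < -k} +
        ENNReal.ofReal ((2 / δ) * ∫ x, |max (u x) (-k) - max (v x) (-k)| ∂μ) := by
  set f : X → ℝ := fun x => |max (u x) (-k) - max (v x) (-k)|
  have hf_nonneg : ∀ x, 0 ≤ f x := fun x => abs_nonneg _
  have hf_int : Integrable f μ :=
    .of_bound ((hu.max measurable_const).sub (hv.max measurable_const)).abs.aestronglyMeasurable
      |k| (.of_forall fun x => by
        simpa [f] using abs_max_sub_max_le_abs_of_nonpos (hu0 x) (hv0 x) (-k))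
  calc μ {x | u x > v x + δ}
      ≤ μ {x | u x < -k} + μ {x | v x < -k} + μ {x | δ ≤ f x} :=
        (measure_mono (setOf_add_lt_subset_truncation u v δ k)).trans <|
          (measure_union_le _ _).trans (add_le_add_left (measure_union_le _ _) _)
    _ ≤ μ {x | u x < -k} + μ {x | v x < -k} + ENNReal.ofReal ((∫ x, f x ∂μ) / δ) := by
        gcongr
        exact measure_le_ofReal_integral_div (.of_forall hf_nonneg) hf_int hδ
    _ ≤ _ := by
        gcongr
        rw [div_eq_inv_mul]
        gcongr
        rw [inv_eq_one_div]
        gcongr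
        norm_num

/-- Let `μ` be a finite measure on `X`, `u v : X → ℝ` measurable with `u ≤ 0`, `v ≤ 0`,
and `δ > 0`, `k > 0`. Then
`μ({u > v + δ}) ≤ μ({u < −k}) + μ({v < −k}) + (2/δ) ∫ |max(u,−k) − max(v,−k)| dμ`. -/
theorem measure_gt_add_le_truncation {X : Type*} [MeasurableSpace X]
    (μ : Measure X) [IsFiniteMeasure μ] (u v : X → ℝ)
    (hu : Measurable u) (hv : Measurable v)
    (hu0 : ∀ x, u x ≤ 0) (hv0 : ∀ x, v x ≤ 0)
    (δ k : ℝ) (hδ : 0 < δ) (hk : 0 < k) :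
    μ {x | u x > v x + δ} ≤
      μ {x | u x < -k} + μ {x | v x < -k} +
        ENNReal.ofReal ((2 / δ) * ∫ x, |max (u x) (-k) - max (v x) (-k)| ∂μ) :=
  measure_gt_add_le_truncation_general μ u v hu hv hu0 hv0 δ k hδ
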